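/- (Lemma: bound on the average momentum ū) Under the lower-bound, mixing, smoothness, and bounded-variance assumptions, for every round r ≥ 0 the Momentum Tracking iterates satisfy E‖ū^{(r+1)}‖² ≤ (2L²/(1−β)) ∑_{k=0}^r β^{r−k} Ξ^{(k)} + (2/(1−β)) ∑_{k=0}^{r} β^{r−k} E‖∇f(x̄^{(k)})‖² + 2σ²/(N(1−β)²). -/

import Mathlib

open MeasureTheory
open scoped BigOperators

noncomputable section

/-- Problem data and standing assumptions (lower bound, mixing, smoothness) for
decentralized optimization over `N` nodes in `ℝ^d`. -/
structure MTProblem (N d : ℕ) (Ω : Type) [mΩ : MeasurableSpace Ω] where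
  /-- Probability measure driving the stochastic gradients. -/
  μ : Measure Ω
  prob : IsProbabilityMeasure μ
  fstar : ℝ
  L : ℝ
  σ : ℝ
  p : ℝ
  β : ℝ
  /-- Local objectives `f_i`. -/
  f : Fin N → EuclideanSpace ℝ (Fin d) → ℝ
  /-- Local gradients `∇f_i`. -/
  g : Fin N → EuclideanSpace ℝ (Fin d) → EuclideanSpace ℝ (Fin d)
  /-- Mixing matrix. -/
  W : Fin N → Fin N → ℝ
  /-- Common initial parameter. -/
  x0 : EuclideanSpace ℝ (Fin d)
  hN : 0 < N
  hβ0 : 0 ≤ β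
  hβ1 : β < 1
  hL : 0 < L
  hp0 : 0 < p
  hp1 : p ≤ 1
  hgrad : ∀ i v, HasGradientAt (f i) (g i v) v
  /-- Lower bound: `f⋆ ≤ f(x)` for all `x`. -/
  hlb : ∀ v, fstar ≤ (N : ℝ)⁻¹ * ∑ i, f i v
  /-- `L`-smoothness of each `f_i`. -/
  hsmooth : ∀ i v w, ‖g i v - g i w‖ ≤ L * ‖v - w‖
  hWsymm : ∀ i j, W i j = W j i
  hWrow : ∀ i, ∑ j, W i j = 1
  hWcol : ∀ j, ∑ i, W i j = 1
  /-- Spectral gap: `‖XW − X̄‖_F² ≤ (1−p)‖X − X̄‖_F²`. -/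
  hmix : ∀ X : Fin N → EuclideanSpace ℝ (Fin d),
    ∑ j, ‖(∑ i, W i j • X i) - (N : ℝ)⁻¹ • ∑ i, X i‖ ^ 2
      ≤ (1 - p) * ∑ j, ‖X j - (N : ℝ)⁻¹ • ∑ i, X i‖ ^ 2

namespace MTProblem

variable {N d : ℕ} {Ω : Type} [mΩ : MeasurableSpace Ω]

/-- Global objective `f = (1/N) ∑_i f_i`. -/
def F (P : MTProblem N d Ω) (v : EuclideanSpace ℝ (Fin d)) : ℝ :=
  (N : ℝ)⁻¹ * ∑ i, P.f i v

/-- Gradient of the global objective, `∇f = (1/N) ∑_i ∇f_i`. -/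
def gradF (P : MTProblem N d Ω) (v : EuclideanSpace ℝ (Fin d)) : EuclideanSpace ℝ (Fin d) :=
  (N : ℝ)⁻¹ • ∑ i, P.g i v

end MTProblem

/-- A run of the Momentum Tracking algorithm: trajectories `x, u, c`, realized
stochastic gradients `G r i = ∇F_i(x_i^{(r)}; ξ_i^{(r)})`, together with the update
rules, the standard initialization, and the stochastic-gradient assumptions
(unbiasedness, bounded variance, independence across nodes and rounds in the form
of orthogonality of the noises). -/
structure MTRun {N d : ℕ} {Ω : Type} [mΩ : MeasurableSpace Ω] (P : MTProblem N d Ω) where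
  /-- Step size. -/
  η : ℝ
  hη : 0 < η
  x : ℕ → Fin N → Ω → EuclideanSpace ℝ (Fin d)
  u : ℕ → Fin N → Ω → EuclideanSpace ℝ (Fin d)
  c : ℕ → Fin N → Ω → EuclideanSpace ℝ (Fin d)
  G : ℕ → Fin N → Ω → EuclideanSpace ℝ (Fin d)
  /-- Filtration of the information available at each round. -/
  ℱ : MeasureTheory.Filtration ℕ mΩ
  hx0 : ∀ i, x 0 i = fun _ => P.x0
  hu0 : ∀ i ω, u 0 i ω = (1 - P.β)⁻¹ • (G 0 i ω - (N : ℝ)⁻¹ • ∑ j, G 0 j ω)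
  hc0 : ∀ i, c 0 i = u 0 i
  hu : ∀ r i ω, u (r + 1) i ω = P.β • u r i ω + G r i ω
  hx : ∀ r i ω, x (r + 1) i ω
      = (∑ j, P.W i j • x r j ω) - η • (u (r + 1) i ω - c r i ω)
  hc : ∀ r i ω, c (r + 1) i ω
      = (∑ j, P.W i j • (c r j ω - u (r + 1) j ω)) + u (r + 1) i ω
  hmeas : ∀ r i, MemLp (G r i) 2 P.μ
  hadapted_x : ∀ r i, StronglyMeasurable[ℱ r] (x r i)
  hadapted_G : ∀ r i, StronglyMeasurable[ℱ (r + 1)] (G r i)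
  /-- Unbiasedness: `E[∇F_i(x_i^{(r)};ξ) | ℱ_r] = ∇f_i(x_i^{(r)})`. -/
  hunbiased : ∀ r i,
    MeasureTheory.condExp (ℱ r) P.μ (G r i) =ᵐ[P.μ] fun ω => P.g i (x r i ω)
  /-- Bounded variance. -/
  hvar : ∀ r i, ∫ ω, ‖G r i ω - P.g i (x r i ω)‖ ^ 2 ∂P.μ ≤ P.σ ^ 2
  /-- Independence across nodes and rounds (orthogonality of the noises). -/
  horth : ∀ r s : ℕ, ∀ i j : Fin N, (r, i) ≠ (s, j) →
    ∫ ω, (inner ℝ (G r i ω - P.g i (x r i ω)) (G s j ω - P.g j (x s j ω)) : ℝ) ∂P.μ = 0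

namespace MTRun

variable {N d : ℕ} {Ω : Type} [mΩ : MeasurableSpace Ω] {P : MTProblem N d Ω}

/-- Node-average of the parameters, `x̄^{(r)}`. -/
def xbar (S : MTRun P) (r : ℕ) (ω : Ω) : EuclideanSpace ℝ (Fin d) :=
  (N : ℝ)⁻¹ • ∑ i, S.x r i ω

/-- Node-average of the momenta, `ū^{(r)}`. -/
def ubar (S : MTRun P) (r : ℕ) (ω : Ω) : EuclideanSpace ℝ (Fin d) :=
  (N : ℝ)⁻¹ • ∑ i, S.u r i ω

/-- Node-average of the correction variables, `c̄^{(r)}`. -/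
def cbar (S : MTRun P) (r : ℕ) (ω : Ω) : EuclideanSpace ℝ (Fin d) :=
  (N : ℝ)⁻¹ • ∑ i, S.c r i ω

/-- Auxiliary average `z̄^{(r)}`. -/
def zbar (S : MTRun P) : ℕ → Ω → EuclideanSpace ℝ (Fin d)
  | 0 => S.xbar 0
  | r + 1 => fun ω =>
      (1 - P.β)⁻¹ • S.xbar (r + 1) ω - (P.β * (1 - P.β)⁻¹) • S.xbar r ω

/-- Auxiliary sequence `d_i^{(r)}`. -/
def dseq (S : MTRun P) : ℕ → Fin N → Ω → EuclideanSpace ℝ (Fin d)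
  | 0 => fun i ω => (1 - P.β)⁻¹ • (P.g i (S.xbar 0 ω) - P.gradF (S.xbar 0 ω))
  | r + 1 => fun i ω => P.β • dseq S r i ω + P.g i (S.xbar r ω)

/-- Auxiliary sequence `e_i^{(r)}`. -/
def eseq (S : MTRun P) : ℕ → Fin N → Ω → EuclideanSpace ℝ (Fin d)
  | 0 => fun _ _ => 0
  | r + 1 => fun i ω => P.β • eseq S r i ω + P.gradF (S.xbar r ω)

/-- Node-average `d̄^{(r)}`. -/
def dbar (S : MTRun P) (r : ℕ) (ω : Ω) : EuclideanSpace ℝ (Fin d) :=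
  (N : ℝ)⁻¹ • ∑ i, S.dseq r i ω

/-- Node-average `ē^{(r)}`. -/
def ebar (S : MTRun P) (r : ℕ) (ω : Ω) : EuclideanSpace ℝ (Fin d) :=
  (N : ℝ)⁻¹ • ∑ i, S.eseq r i ω

/-- Consensus distance `Ξ^{(r)} = (1/N) E‖X^{(r)} − X̄^{(r)}‖_F²`. -/
def Xi (S : MTRun P) (r : ℕ) : ℝ :=
  (N : ℝ)⁻¹ * ∫ ω, (∑ i, ‖S.x r i ω - S.xbar r ω‖ ^ 2) ∂P.μ

/-- Tracking error `ℰ^{(r)} = (1/N) E‖D^{(r+1)} − C^{(r)} − E^{(r+1)}‖_F²`. -/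
def EE (S : MTRun P) (r : ℕ) : ℝ :=
  (N : ℝ)⁻¹ *
    ∫ ω, (∑ i, ‖S.dseq (r + 1) i ω - S.c r i ω - S.eseq (r + 1) i ω‖ ^ 2) ∂P.μ

/-- Momentum drift `𝒟^{(r)} = (1/N) E‖D^{(r+1)} − D^{(r)} − E^{(r+1)} + E^{(r)}‖_F²`. -/
def DD (S : MTRun P) (r : ℕ) : ℝ :=
  (N : ℝ)⁻¹ *
    ∫ ω, (∑ i,
      ‖S.dseq (r + 1) i ω - S.dseq r i ω - S.eseq (r + 1) i ω + S.eseq r i ω‖ ^ 2) ∂P.μ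

end MTRun

/-!
Write `ū^{(r+1)} = (β ū^{(r)} + ḡ^{(r)}) + ξ̄^{(r)}`, where `ḡ^{(r)}` averages the local gradients
at the local iterates and `ξ̄^{(r)}` averages the gradient noises. The bracket is `ℱ_r`-measurable
and the noise has zero conditional mean, so the second moments add; the noises of different nodes
are orthogonal, so `E‖ξ̄^{(r)}‖² ≤ σ²/N`. Convexity of `‖·‖²` with weights `β, 1 - β` gives
`‖β a + b‖² ≤ β‖a‖² + ‖b‖²/(1 - β)`, and `L`-smoothness gives
`‖ḡ‖² ≤ 2L² (1/N)∑‖x_i - x̄‖² + 2‖∇f(x̄)‖²`. Unrolling `a_{r+1} ≤ β a_r + c_r` from `a_0 = 0`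
proves the bound, the noise contributing `σ²/(N(1-β)) ≤ 2σ²/(N(1-β)²)`.
-/
open Finset
open scoped InnerProductSpace

namespace MeasureTheory

variable {Ω : Type*} {m mΩ : MeasurableSpace Ω} {μ : Measure Ω}

theorem MemLp.integrable_sq_norm {F : Type*} [NormedAddCommGroup F] {f : Ω → F}
    (hf : MemLp f 2 μ) : Integrable (fun ω => ‖f ω‖ ^ 2) μ :=
  (memLp_two_iff_integrable_sq_norm hf.1).1 hf

theorem _root_.LipschitzWith.comp_memLp_of_isFiniteMeasure [IsFiniteMeasure μ]
    {E F : Type*} [NormedAddCommGroup E] [NormedAddCommGroup F] {K : NNReal} {p : ENNReal}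
    {g : E → F} (hg : LipschitzWith K g) {f : Ω → E} (hf : MemLp f p μ) :
    MemLp (g ∘ f) p μ := by
  have hg₀ : LipschitzWith K (fun v => g v - g 0) := by
    simpa using hg.sub (LipschitzWith.const (g 0))
  convert (hg₀.comp_memLp (by simp) hf).add (memLp_const (g 0)) using 1
  ext ω
  simp

variable {E : Type*} [NormedAddCommGroup E] [InnerProductSpace ℝ E]

theorem MemLp.integrable_inner {f g : Ω → E} (hf : MemLp f 2 μ) (hg : MemLp g 2 μ) :
    Integrable (fun ω => ⟪f ω, g ω⟫_ℝ) μ :=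
  (L2.integrable_inner (𝕜 := ℝ) (hf.toLp f) (hg.toLp g)).congr <| by
    filter_upwards [hf.coeFn_toLp, hg.coeFn_toLp] with ω hfω hgω
    rw [hfω, hgω]

theorem integral_norm_add_sq_of_integral_inner_eq_zero {f g : Ω → E} (hf : MemLp f 2 μ)
    (hg : MemLp g 2 μ) (hfg : ∫ ω, ⟪f ω, g ω⟫_ℝ ∂μ = 0) :
    ∫ ω, ‖f ω + g ω‖ ^ 2 ∂μ = ∫ ω, ‖f ω‖ ^ 2 ∂μ + ∫ ω, ‖g ω‖ ^ 2 ∂μ := by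
  have hcross := (hf.integrable_inner hg).const_mul 2
  simp_rw [norm_add_sq_real]
  rw [integral_add (f := fun ω => ‖f ω‖ ^ 2 + 2 * ⟪f ω, g ω⟫_ℝ)
      (hf.integrable_sq_norm.add hcross) hg.integrable_sq_norm,
    integral_add hf.integrable_sq_norm hcross, integral_const_mul, hfg, mul_zero, add_zero]

theorem integral_norm_sum_sq_of_orthogonal {ι : Type*} [Fintype ι] {f : ι → Ω → E}
    (hf : ∀ i, MemLp (f i) 2 μ) (horth : ∀ i j, i ≠ j → ∫ ω, ⟪f i ω, f j ω⟫_ℝ ∂μ = 0) :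
    ∫ ω, ‖∑ i, f i ω‖ ^ 2 ∂μ = ∑ i, ∫ ω, ‖f i ω‖ ^ 2 ∂μ := by
  simp_rw [← real_inner_self_eq_norm_sq, sum_inner, inner_sum]
  rw [integral_finsetSum _ fun i _ => integrable_finsetSum _ fun j _ =>
    (hf i).integrable_inner (hf j)]
  refine sum_congr rfl fun i _ => ?_
  rw [integral_finsetSum _ fun j _ => (hf i).integrable_inner (hf j)]
  exact sum_eq_single i (fun j _ hji => horth i j hji.symm) (by simp)

theorem integral_inner_eq_zero_of_condExp_eq_zero [CompleteSpace E] (hm : m ≤ mΩ)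
    [SigmaFinite (μ.trim hm)] {h ξ : Ω → E} (hh : StronglyMeasurable[m] h)
    (hhξ : Integrable (fun ω => ⟪h ω, ξ ω⟫_ℝ) μ) (hξ : Integrable ξ μ)
    (hξ₀ : μ[ξ|m] =ᵐ[μ] 0) :
    ∫ ω, ⟪h ω, ξ ω⟫_ℝ ∂μ = 0 := by
  rw [← integral_condExp hm]
  refine integral_eq_zero_of_ae ?_
  filter_upwards [condExp_bilin_of_stronglyMeasurable_left (innerSL ℝ) hh hhξ hξ, hξ₀]
    with ω hpull hzero
  refine hpull.trans ?_
  simp [hzero]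

end MeasureTheory

theorem norm_smul_add_sq_le {E : Type*} [SeminormedAddCommGroup E] [NormedSpace ℝ E] {β : ℝ}
    (hβ₀ : 0 ≤ β) (hβ₁ : β < 1) (a b : E) :
    ‖β • a + b‖ ^ 2 ≤ β * ‖a‖ ^ 2 + (1 - β)⁻¹ * ‖b‖ ^ 2 := by
  have hβ : 0 < 1 - β := sub_pos.2 hβ₁
  have htri : ‖β • a + b‖ ≤ β * ‖a‖ + ‖b‖ := by
    simpa [norm_smul, abs_of_nonneg hβ₀] using norm_add_le (β • a) b
  -- the defect of Jensen's inequality for the weights `β, 1 - β`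
  have hjensen : β * ‖a‖ ^ 2 + (1 - β)⁻¹ * ‖b‖ ^ 2 - (β * ‖a‖ + ‖b‖) ^ 2
      = β * ((1 - β) * ‖a‖ - ‖b‖) ^ 2 / (1 - β) := by
    field_simp
    ring
  calc ‖β • a + b‖ ^ 2 ≤ (β * ‖a‖ + ‖b‖) ^ 2 := by gcongr
    _ ≤ β * ‖a‖ ^ 2 + (1 - β)⁻¹ * ‖b‖ ^ 2 := by
      rw [← sub_nonneg, hjensen]
      positivity

theorem norm_inv_card_smul_sum_sq_le {ι E : Type*} [SeminormedAddCommGroup E] [NormedSpace ℝ E]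
    (s : Finset ι) (v : ι → E) :
    ‖(#s : ℝ)⁻¹ • ∑ i ∈ s, v i‖ ^ 2 ≤ (#s : ℝ)⁻¹ * ∑ i ∈ s, ‖v i‖ ^ 2 := by
  calc ‖(#s : ℝ)⁻¹ • ∑ i ∈ s, v i‖ ^ 2 ≤ ((#s : ℝ)⁻¹ * ∑ i ∈ s, ‖v i‖) ^ 2 := by
        rw [norm_smul, Real.norm_of_nonneg (by positivity)]
        gcongr
        exact norm_sum_le _ _
    _ ≤ (#s : ℝ)⁻¹ ^ 2 * (#s * ∑ i ∈ s, ‖v i‖ ^ 2) := by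
        rw [mul_pow]
        gcongr
        exact sq_sum_le_card_mul_sum_sq
    _ = (#s : ℝ)⁻¹ * ∑ i ∈ s, ‖v i‖ ^ 2 := by
        field_simp

theorem le_sum_pow_mul_of_le_mul_add {a c : ℕ → ℝ} {β : ℝ} (hβ : 0 ≤ β) (ha₀ : a 0 = 0)
    (hstep : ∀ k, a (k + 1) ≤ β * a k + c k) (r : ℕ) :
    a (r + 1) ≤ ∑ k ∈ range (r + 1), β ^ (r - k) * c k := by
  induction r with
  | zero => simpa [ha₀] using hstep 0
  | succ r ih =>
    calc a (r + 2) ≤ β * a (r + 1) + c (r + 1) := hstep (r + 1)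
      _ ≤ β * ∑ k ∈ range (r + 1), β ^ (r - k) * c k + c (r + 1) := by gcongr
      _ = ∑ k ∈ range (r + 2), β ^ (r + 1 - k) * c k := by
        rw [sum_range_succ _ (r + 1), mul_sum, Nat.sub_self, pow_zero, one_mul]
        congr 1
        refine sum_congr rfl fun k hk => ?_
        rw [Nat.sub_add_comm (Nat.lt_succ_iff.1 (mem_range.1 hk)), pow_succ]
        ring

theorem sum_range_pow_sub_le_inv_one_sub {β : ℝ} (hβ₀ : 0 ≤ β) (hβ₁ : β < 1) (n : ℕ) :
    ∑ k ∈ range (n + 1), β ^ (n - k) ≤ (1 - β)⁻¹ := by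
  have hreflect := sum_range_reflect (β ^ ·) (n + 1)
  simp only [add_tsub_cancel_right] at hreflect
  rw [hreflect, range_eq_Ico]
  simpa [one_div] using geom_sum_Ico_le_of_lt_one (m := 0) (n := n + 1) hβ₀ hβ₁

namespace MTProblem

variable {N d : ℕ} {Ω : Type} [MeasurableSpace Ω] (P : MTProblem N d Ω)

theorem lipschitzWith_g (i : Fin N) : LipschitzWith P.L.toNNReal (P.g i) :=
  LipschitzWith.of_dist_le_mul fun v w => by
    simpa [dist_eq_norm, Real.coe_toNNReal _ P.hL.le] using P.hsmooth i v w

theorem memLp_g_comp {h : Ω → EuclideanSpace ℝ (Fin d)} (hh : MemLp h 2 P.μ) (i : Fin N) :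
    MemLp (fun ω => P.g i (h ω)) 2 P.μ :=
  have := P.prob
  (P.lipschitzWith_g i).comp_memLp_of_isFiniteMeasure hh

theorem memLp_gradF_comp {h : Ω → EuclideanSpace ℝ (Fin d)} (hh : MemLp h 2 P.μ) :
    MemLp (fun ω => P.gradF (h ω)) 2 P.μ :=
  (memLp_finsetSum univ fun i _ => P.memLp_g_comp hh i).const_smul (N : ℝ)⁻¹

end MTProblem

namespace MTRun

variable {N d : ℕ} {Ω : Type} [MeasurableSpace Ω] {P : MTProblem N d Ω} (S : MTRun P)

def noise (r : ℕ) (i : Fin N) (ω : Ω) : EuclideanSpace ℝ (Fin d) :=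
  S.G r i ω - P.g i (S.x r i ω)

def gbar (r : ℕ) (ω : Ω) : EuclideanSpace ℝ (Fin d) :=
  (N : ℝ)⁻¹ • ∑ i, P.g i (S.x r i ω)

theorem memLp_x_u_c (r : ℕ) :
    (∀ i, MemLp (S.x r i) 2 P.μ) ∧ (∀ i, MemLp (S.u r i) 2 P.μ) ∧
      (∀ i, MemLp (S.c r i) 2 P.μ) := by
  have := P.prob
  induction r with
  | zero =>
    have hu : ∀ i, MemLp (S.u 0 i) 2 P.μ := fun i => by
      rw [funext (S.hu0 i)]
      exact ((S.hmeas 0 i).sub ((memLp_finsetSum univ fun j _ => S.hmeas 0 j).const_smul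
        (N : ℝ)⁻¹)).const_smul (1 - P.β)⁻¹
    refine ⟨fun i => ?_, hu, fun i => ?_⟩
    · rw [S.hx0 i]
      exact memLp_const _
    · rw [S.hc0 i]
      exact hu i
  | succ r ih =>
    obtain ⟨hx, hu, hc⟩ := ih
    have hu' : ∀ i, MemLp (S.u (r + 1) i) 2 P.μ := fun i => by
      rw [funext (S.hu r i)]
      exact ((hu i).const_smul P.β).add (S.hmeas r i)
    refine ⟨fun i => ?_, hu', fun i => ?_⟩
    · rw [funext (S.hx r i)]
      exact (memLp_finsetSum univ fun j _ => (hx j).const_smul (P.W i j)).sub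
        (((hu' i).sub (hc i)).const_smul S.η)
    · rw [funext (S.hc r i)]
      exact (memLp_finsetSum univ fun j _ => ((hc j).sub (hu' j)).const_smul (P.W i j)).add
        (hu' i)

theorem memLp_x (r : ℕ) (i : Fin N) : MemLp (S.x r i) 2 P.μ := (S.memLp_x_u_c r).1 i

theorem memLp_xbar (r : ℕ) : MemLp (S.xbar r) 2 P.μ :=
  (memLp_finsetSum univ fun i _ => S.memLp_x r i).const_smul (N : ℝ)⁻¹

theorem memLp_ubar (r : ℕ) : MemLp (S.ubar r) 2 P.μ :=
  (memLp_finsetSum univ fun i _ => (S.memLp_x_u_c r).2.1 i).const_smul (N : ℝ)⁻¹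

theorem memLp_gbar (r : ℕ) : MemLp (S.gbar r) 2 P.μ :=
  (memLp_finsetSum univ fun i _ => P.memLp_g_comp (S.memLp_x r i) i).const_smul (N : ℝ)⁻¹

theorem memLp_noise (r : ℕ) (i : Fin N) : MemLp (S.noise r i) 2 P.μ :=
  (S.hmeas r i).sub (P.memLp_g_comp (S.memLp_x r i) i)

theorem ubar_zero : S.ubar 0 = 0 := by
  have hN : (N : ℝ) ≠ 0 := Nat.cast_ne_zero.2 P.hN.ne'
  ext1 ω
  simp only [ubar, S.hu0, ← smul_sum, sum_sub_distrib, sum_const, card_univ, Fintype.card_fin,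
    ← Nat.cast_smul_eq_nsmul ℝ, smul_smul, inv_mul_cancel₀ hN, one_smul, sub_self, smul_zero,
    Pi.zero_apply]

theorem ubar_succ (r : ℕ) (ω : Ω) :
    S.ubar (r + 1) ω = P.β • S.ubar r ω + (N : ℝ)⁻¹ • ∑ i, S.G r i ω := by
  simp only [ubar, S.hu, sum_add_distrib, ← smul_sum, smul_add, smul_comm (N : ℝ)⁻¹ P.β]

theorem ubar_succ_eq_add_noise (r : ℕ) (ω : Ω) :
    S.ubar (r + 1) ω = (P.β • S.ubar r ω + S.gbar r ω) + (N : ℝ)⁻¹ • ∑ i, S.noise r i ω := by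
  simp only [ubar_succ, gbar, noise, sum_sub_distrib, smul_sub]
  abel

theorem stronglyMeasurable_ubar (r : ℕ) : StronglyMeasurable[S.ℱ r] (S.ubar r) := by
  induction r with
  | zero => rw [S.ubar_zero]; exact stronglyMeasurable_const
  | succ r ih =>
    rw [funext (S.ubar_succ r)]
    exact ((ih.mono (S.ℱ.mono r.le_succ)).const_smul P.β).add
      ((Finset.stronglyMeasurable_fun_sum univ fun i _ => S.hadapted_G r i).const_smul (N : ℝ)⁻¹)

theorem stronglyMeasurable_g_comp_x (r : ℕ) (i : Fin N) :
    StronglyMeasurable[S.ℱ r] (fun ω => P.g i (S.x r i ω)) :=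
  (P.lipschitzWith_g i).continuous.comp_stronglyMeasurable (S.hadapted_x r i)

theorem stronglyMeasurable_gbar (r : ℕ) : StronglyMeasurable[S.ℱ r] (S.gbar r) :=
  (Finset.stronglyMeasurable_fun_sum univ fun i _ => S.stronglyMeasurable_g_comp_x r i).const_smul
    (N : ℝ)⁻¹

theorem condExp_noise (r : ℕ) (i : Fin N) : P.μ[S.noise r i|S.ℱ r] =ᵐ[P.μ] 0 := by
  have := P.prob
  have hg := P.memLp_g_comp (S.memLp_x r i) i
  have hsub : P.μ[S.noise r i|S.ℱ r] =ᵐ[P.μ]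
      P.μ[S.G r i|S.ℱ r] - P.μ[fun ω => P.g i (S.x r i ω)|S.ℱ r] :=
    condExp_sub ((S.hmeas r i).integrable one_le_two) (hg.integrable one_le_two) _
  filter_upwards [hsub, S.hunbiased r i] with ω hsub hG
  rw [hsub, Pi.sub_apply, hG, condExp_of_stronglyMeasurable (S.ℱ.le r)
    (S.stronglyMeasurable_g_comp_x r i) (hg.integrable one_le_two), sub_self, Pi.zero_apply]


theorem integral_inner_noise_avg (r : ℕ) {h : Ω → EuclideanSpace ℝ (Fin d)}
    (hsm : StronglyMeasurable[S.ℱ r] h) (hh : MemLp h 2 P.μ) :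
    ∫ ω, ⟪h ω, (N : ℝ)⁻¹ • ∑ i, S.noise r i ω⟫_ℝ ∂P.μ = 0 := by
  have := P.prob
  simp_rw [real_inner_smul_right, inner_sum]
  rw [integral_const_mul, integral_finsetSum _ fun i _ => hh.integrable_inner (S.memLp_noise r i),
    sum_eq_zero fun i _ => integral_inner_eq_zero_of_condExp_eq_zero (S.ℱ.le r) hsm
      (hh.integrable_inner (S.memLp_noise r i)) ((S.memLp_noise r i).integrable one_le_two)
      (S.condExp_noise r i), mul_zero]

theorem integral_norm_sq_noise_avg_le (r : ℕ) :
    ∫ ω, ‖(N : ℝ)⁻¹ • ∑ i, S.noise r i ω‖ ^ 2 ∂P.μ ≤ P.σ ^ 2 / N := by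
  have horth : ∀ i j, i ≠ j → ∫ ω, ⟪S.noise r i ω, S.noise r j ω⟫_ℝ ∂P.μ = 0 :=
    fun i j hij => S.horth r r i j (by simpa using hij)
  simp_rw [norm_smul, mul_pow]
  rw [integral_const_mul, integral_norm_sum_sq_of_orthogonal (S.memLp_noise r) horth]
  calc ‖(N : ℝ)⁻¹‖ ^ 2 * ∑ i, ∫ ω, ‖S.noise r i ω‖ ^ 2 ∂P.μ
      ≤ ((N : ℝ)⁻¹) ^ 2 * ∑ _i : Fin N, P.σ ^ 2 := by
        rw [Real.norm_of_nonneg (by positivity)]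
        gcongr with i
        exact S.hvar r i
    _ = P.σ ^ 2 / N := by
        simp only [sum_const, card_univ, Fintype.card_fin, nsmul_eq_mul]
        field_simp

theorem norm_sq_gbar_le (r : ℕ) (ω : Ω) :
    ‖S.gbar r ω‖ ^ 2 ≤ 2 * P.L ^ 2 * ((N : ℝ)⁻¹ * ∑ i, ‖S.x r i ω - S.xbar r ω‖ ^ 2)
      + 2 * ‖P.gradF (S.xbar r ω)‖ ^ 2 := by
  have hdiff : S.gbar r ω - P.gradF (S.xbar r ω)
      = (N : ℝ)⁻¹ • ∑ i, (P.g i (S.x r i ω) - P.g i (S.xbar r ω)) := by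
    simp only [gbar, MTProblem.gradF, sum_sub_distrib, smul_sub]
  have hsmooth : ‖S.gbar r ω - P.gradF (S.xbar r ω)‖ ^ 2
      ≤ P.L ^ 2 * ((N : ℝ)⁻¹ * ∑ i, ‖S.x r i ω - S.xbar r ω‖ ^ 2) := by
    have havg := norm_inv_card_smul_sum_sq_le univ
      fun i => P.g i (S.x r i ω) - P.g i (S.xbar r ω)
    simp only [card_univ, Fintype.card_fin] at havg
    rw [hdiff, mul_left_comm, mul_sum]
    refine havg.trans (mul_le_mul_of_nonneg_left (sum_le_sum fun i _ => ?_) (by positivity))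
    rw [← mul_pow]
    exact pow_le_pow_left₀ (norm_nonneg _) (P.hsmooth i _ _) 2
  calc ‖S.gbar r ω‖ ^ 2
      ≤ (‖S.gbar r ω - P.gradF (S.xbar r ω)‖ + ‖P.gradF (S.xbar r ω)‖) ^ 2 := by
        gcongr
        exact norm_le_norm_sub_add _ _
    _ ≤ 2 * (‖S.gbar r ω - P.gradF (S.xbar r ω)‖ ^ 2 + ‖P.gradF (S.xbar r ω)‖ ^ 2) :=
        add_sq_le
    _ ≤ _ := by linarith

theorem integral_norm_sq_gbar_le (r : ℕ) :
    ∫ ω, ‖S.gbar r ω‖ ^ 2 ∂P.μ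
      ≤ 2 * P.L ^ 2 * S.Xi r + 2 * ∫ ω, ‖P.gradF (S.xbar r ω)‖ ^ 2 ∂P.μ := by
  have hcons : Integrable (fun ω => ∑ i, ‖S.x r i ω - S.xbar r ω‖ ^ 2) P.μ :=
    integrable_finsetSum _ fun i _ => ((S.memLp_x r i).sub (S.memLp_xbar r)).integrable_sq_norm
  have hgrad := (P.memLp_gradF_comp (S.memLp_xbar r)).integrable_sq_norm
  calc ∫ ω, ‖S.gbar r ω‖ ^ 2 ∂P.μ
      ≤ ∫ ω, (2 * P.L ^ 2 * ((N : ℝ)⁻¹ * ∑ i, ‖S.x r i ω - S.xbar r ω‖ ^ 2)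
          + 2 * ‖P.gradF (S.xbar r ω)‖ ^ 2) ∂P.μ :=
        integral_mono (S.memLp_gbar r).integrable_sq_norm
          (((hcons.const_mul _).const_mul _).add (hgrad.const_mul _)) (S.norm_sq_gbar_le r)
    _ = 2 * P.L ^ 2 * S.Xi r + 2 * ∫ ω, ‖P.gradF (S.xbar r ω)‖ ^ 2 ∂P.μ := by
        rw [integral_add ((hcons.const_mul _).const_mul _) (hgrad.const_mul _),
          integral_const_mul, integral_const_mul, integral_const_mul, Xi]

theorem integral_norm_sq_ubar_succ_le (r : ℕ) :
    ∫ ω, ‖S.ubar (r + 1) ω‖ ^ 2 ∂P.μ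
      ≤ P.β * ∫ ω, ‖S.ubar r ω‖ ^ 2 ∂P.μ
        + ((1 - P.β)⁻¹ * (2 * P.L ^ 2 * S.Xi r + 2 * ∫ ω, ‖P.gradF (S.xbar r ω)‖ ^ 2 ∂P.μ)
          + P.σ ^ 2 / N) := by
  have hβ : 0 < 1 - P.β := sub_pos.2 P.hβ1
  have hw : MemLp (fun ω => P.β • S.ubar r ω + S.gbar r ω) 2 P.μ :=
    ((S.memLp_ubar r).const_smul P.β).add (S.memLp_gbar r)
  have hz : MemLp (fun ω => (N : ℝ)⁻¹ • ∑ i, S.noise r i ω) 2 P.μ :=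
    (memLp_finsetSum univ fun i _ => S.memLp_noise r i).const_smul (N : ℝ)⁻¹
  have hcross := S.integral_inner_noise_avg r
    (((S.stronglyMeasurable_ubar r).const_smul P.β).add (S.stronglyMeasurable_gbar r)) hw
  have hdrift : ∫ ω, ‖P.β • S.ubar r ω + S.gbar r ω‖ ^ 2 ∂P.μ
      ≤ P.β * ∫ ω, ‖S.ubar r ω‖ ^ 2 ∂P.μ + (1 - P.β)⁻¹ * ∫ ω, ‖S.gbar r ω‖ ^ 2 ∂P.μ := by
    have hu := (S.memLp_ubar r).integrable_sq_norm.const_mul P.β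
    have hg := (S.memLp_gbar r).integrable_sq_norm.const_mul (1 - P.β)⁻¹
    rw [← integral_const_mul, ← integral_const_mul, ← integral_add hu hg]
    exact integral_mono hw.integrable_sq_norm (hu.add hg)
      fun ω => norm_smul_add_sq_le P.hβ0 P.hβ1 _ _
  have hgbar := mul_le_mul_of_nonneg_left (S.integral_norm_sq_gbar_le r) (inv_pos.2 hβ).le
  simp_rw [S.ubar_succ_eq_add_noise r]
  rw [integral_norm_add_sq_of_integral_inner_eq_zero hw hz hcross]
  linarith [S.integral_norm_sq_noise_avg_le r]

end MTRun

/-- **Lemma** (bound on the average momentum `ū`): for every round `r ≥ 0`,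
`E‖ū^{(r+1)}‖² ≤ (2L²/(1−β)) ∑_{k=0}^{r} β^{r−k} Ξ^{(k)}
  + (2/(1−β)) ∑_{k=0}^{r} β^{r−k} E‖∇f(x̄^{(k)})‖² + 2σ²/(N(1−β)²)`. -/
theorem ubar_bound
    (N d : ℕ) (Ω : Type) [mΩ : MeasurableSpace Ω]
    (P : MTProblem N d Ω) (S : MTRun P) :
    ∀ r : ℕ,
      ∫ ω, ‖S.ubar (r + 1) ω‖ ^ 2 ∂P.μ ≤
        2 * P.L ^ 2 / (1 - P.β) * ∑ k ∈ Finset.range (r + 1), P.β ^ (r - k) * S.Xi k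
          + 2 / (1 - P.β) *
              ∑ k ∈ Finset.range (r + 1),
                P.β ^ (r - k) * ∫ ω, ‖P.gradF (S.xbar k ω)‖ ^ 2 ∂P.μ
          + 2 * P.σ ^ 2 / ((N : ℝ) * (1 - P.β) ^ 2) := by
  intro r
  have hunrolled := le_sum_pow_mul_of_le_mul_add (a := fun k => ∫ ω, ‖S.ubar k ω‖ ^ 2 ∂P.μ)
    P.hβ0 (by simp [S.ubar_zero]) S.integral_norm_sq_ubar_succ_le r
  have hnoise : P.σ ^ 2 / N * ∑ k ∈ range (r + 1), P.β ^ (r - k)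
      ≤ 2 * P.σ ^ 2 / ((N : ℝ) * (1 - P.β) ^ 2) := by
    calc P.σ ^ 2 / N * ∑ k ∈ range (r + 1), P.β ^ (r - k)
        ≤ P.σ ^ 2 / N * (1 - P.β)⁻¹ := by
          gcongr
          exact sum_range_pow_sub_le_inv_one_sub P.hβ0 P.hβ1 r
      _ = (1 - P.β) * P.σ ^ 2 / ((N : ℝ) * (1 - P.β) ^ 2) := by
          field_simp
      _ ≤ 2 * P.σ ^ 2 / ((N : ℝ) * (1 - P.β) ^ 2) := by
          gcongr
          linarith [P.hβ0]
  calc ∫ ω, ‖S.ubar (r + 1) ω‖ ^ 2 ∂P.μ ≤ _ := hunrolled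
    _ = 2 * P.L ^ 2 / (1 - P.β) * ∑ k ∈ range (r + 1), P.β ^ (r - k) * S.Xi k
          + 2 / (1 - P.β) *
              ∑ k ∈ range (r + 1), P.β ^ (r - k) * ∫ ω, ‖P.gradF (S.xbar k ω)‖ ^ 2 ∂P.μ
          + P.σ ^ 2 / N * ∑ k ∈ range (r + 1), P.β ^ (r - k) := by
        simp only [mul_sum, ← sum_add_distrib]
        refine sum_congr rfl fun k _ => ?_
        ring
    _ ≤ _ := by gcongr

end
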